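/- Let f be a rational function (quotient of polynomials with complex coefficients) and suppose |f(z)| = 1 for all z on the unit circle where f is defined. Then f is a quotient of two finite Blaschke products. -/

import Mathlib

/-- A finite Blaschke product: `B(z) = λ · ∏ (z - aₖ)/(1 - conj(aₖ)·z)` with `|λ| = 1`
and `|aₖ| < 1`, viewed as a function on the closed unit disk. -/
def IsFiniteBlaschke (B : ℂ → ℂ) : Prop :=
  ∃ (n : ℕ) (lam : ℂ) (a : Fin n → ℂ),
    ‖lam‖ = 1 ∧ (∀ k, ‖a k‖ < 1) ∧
    ∀ z : ℂ, ‖z‖ ≤ 1 →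
      B z = lam * ∏ k, (z - a k) / (1 - (starRingEnd ℂ) (a k) * z)

/-!
A Blaschke factor `(z - a) / (1 - conj a * z)` has modulus one on the unit circle, so every nonzero
polynomial is, on the closed disk, a finite Blaschke product times a polynomial with no zeros in
the open disk: each zero `a` with `‖a‖ < 1` is traded for the factor `1 - conj a * z`.

For `P / Q` of modulus one, the zero-free parts `R` and `S` of `P` and `Q` then have equal moduli
on the circle. Writing `R*` for the reflected polynomial `z ^ deg R * conj (R (conj z)⁻¹)`, this
gives the polynomial identity `R R* z ^ deg S = S S* z ^ deg R`, so each zero `a` of `R` is a zero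
of `S` or `(conj a)⁻¹` is; since `S` has no zeros in the open disk and `(conj a)⁻¹ = a` when
`‖a‖ = 1`, it is a zero of `S`. Cancelling common zeros gives `R = c S` with `‖c‖ = 1`.
-/

open Polynomial ComplexConjugate

theorem infinite_setOf_norm_eq_one : {z : ℂ | ‖z‖ = 1}.Infinite := by
  have hrank : 1 < Module.rank ℝ ℂ := by rw [Complex.rank_real_complex]; norm_num
  simpa [Metric.sphere] using (isPreconnected_sphere hrank (0 : ℂ) 1).infinite_of_nontrivial
    ⟨1, by simp, -1, by simp, by norm_num⟩

theorem norm_one_sub_conj_mul {a z : ℂ} (hz : ‖z‖ = 1) : ‖1 - conj a * z‖ = ‖z - a‖ := by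
  have hz0 : z ≠ 0 := norm_ne_zero_iff.mp (by rw [hz]; exact one_ne_zero)
  have : 1 - conj a * z = z * conj (z - a) := by
    rw [map_sub, ← Complex.inv_eq_conj hz, mul_sub, mul_inv_cancel₀ hz0]; ring
  rw [this, norm_mul, hz, one_mul, Complex.norm_conj]

theorem one_sub_conj_mul_ne_zero {a z : ℂ} (ha : ‖a‖ < 1) (hz : ‖z‖ ≤ 1) :
    1 - conj a * z ≠ 0 := by
  refine sub_ne_zero.mpr fun h => ?_
  have : ‖conj a * z‖ < 1 := by
    rw [norm_mul, Complex.norm_conj]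
    exact mul_lt_one_of_nonneg_of_lt_one_left (norm_nonneg a) ha hz
  rw [← h, norm_one] at this
  exact lt_irrefl _ this

namespace IsFiniteBlaschke

theorem const {c : ℂ} (hc : ‖c‖ = 1) : IsFiniteBlaschke fun _ => c :=
  ⟨0, c, Fin.elim0, hc, fun k => k.elim0, fun z _ => by simp⟩

theorem one : IsFiniteBlaschke 1 := const norm_one

theorem factor {a : ℂ} (ha : ‖a‖ < 1) : IsFiniteBlaschke fun z => (z - a) / (1 - conj a * z) :=
  ⟨1, 1, fun _ => a, norm_one, fun _ => ha, fun z _ => by simp⟩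

theorem mul {B₁ B₂ : ℂ → ℂ} (h₁ : IsFiniteBlaschke B₁) (h₂ : IsFiniteBlaschke B₂) :
    IsFiniteBlaschke (B₁ * B₂) := by
  obtain ⟨n, lam, a, hlam, ha, hB₁⟩ := h₁
  obtain ⟨m, mu, b, hmu, hb, hB₂⟩ := h₂
  refine ⟨n + m, lam * mu, Fin.append a b, by rw [norm_mul, hlam, hmu, one_mul],
    Fin.addCases (by simpa using ha) (by simpa using hb), fun z hz => ?_⟩
  rw [Pi.mul_apply, hB₁ z hz, hB₂ z hz, Fin.prod_univ_add]
  simp only [Fin.append_left, Fin.append_right]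
  ring

theorem norm_eq_one {B : ℂ → ℂ} (hB : IsFiniteBlaschke B) {z : ℂ} (hz : ‖z‖ = 1) :
    ‖B z‖ = 1 := by
  obtain ⟨n, lam, a, hlam, ha, hB⟩ := hB
  rw [hB z hz.le, norm_mul, hlam, one_mul, norm_prod]
  refine Finset.prod_eq_one fun k _ => ?_
  rw [norm_div, norm_one_sub_conj_mul hz, div_self]
  exact norm_ne_zero_iff.mpr (sub_ne_zero.mpr fun h => (ha k).ne (by rw [← h, hz]))

end IsFiniteBlaschke

structure IsBlaschkeFactorization (P : ℂ[X]) (B : ℂ → ℂ) (R : ℂ[X]) : Prop where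
  isFiniteBlaschke : IsFiniteBlaschke B
  eval_ne_zero : ∀ z : ℂ, ‖z‖ < 1 → R.eval z ≠ 0
  eval_eq : ∀ z : ℂ, ‖z‖ ≤ 1 → P.eval z = B z * R.eval z

namespace IsBlaschkeFactorization

theorem const {c : ℂ} (hc : c ≠ 0) : IsBlaschkeFactorization (C c) 1 (C c) :=
  ⟨IsFiniteBlaschke.one, fun _ _ => by simpa using hc, fun _ _ => by simp⟩

theorem mul {P₁ P₂ R₁ R₂ : ℂ[X]} {B₁ B₂ : ℂ → ℂ} (h₁ : IsBlaschkeFactorization P₁ B₁ R₁)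
    (h₂ : IsBlaschkeFactorization P₂ B₂ R₂) :
    IsBlaschkeFactorization (P₁ * P₂) (B₁ * B₂) (R₁ * R₂) where
  isFiniteBlaschke := h₁.isFiniteBlaschke.mul h₂.isFiniteBlaschke
  eval_ne_zero z hz := by
    rw [eval_mul]; exact mul_ne_zero (h₁.eval_ne_zero z hz) (h₂.eval_ne_zero z hz)
  eval_eq z hz := by
    rw [eval_mul, eval_mul, h₁.eval_eq z hz, h₂.eval_eq z hz, Pi.mul_apply]; ring

theorem norm_eval_eq {P R : ℂ[X]} {B : ℂ → ℂ} (h : IsBlaschkeFactorization P B R) {z : ℂ}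
    (hz : ‖z‖ = 1) : ‖R.eval z‖ = ‖P.eval z‖ := by
  rw [h.eval_eq z hz.le, norm_mul, h.isFiniteBlaschke.norm_eq_one hz, one_mul]

theorem exists_X_sub_C (a : ℂ) : ∃ B R, IsBlaschkeFactorization (X - C a) B R := by
  by_cases ha : ‖a‖ < 1
  · refine ⟨_, C 1 - C (conj a) * X,
      ⟨IsFiniteBlaschke.factor ha, fun z hz => ?_, fun z hz => ?_⟩⟩
    · simpa using one_sub_conj_mul_ne_zero ha hz.le
    · simp [div_mul_cancel₀ _ (one_sub_conj_mul_ne_zero ha hz)]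
  · refine ⟨1, X - C a, ⟨IsFiniteBlaschke.one, fun z hz => ?_, fun z _ => by simp⟩⟩
    rw [eval_sub, eval_X, eval_C, sub_ne_zero]
    rintro rfl
    exact ha hz

theorem exists_of_ne_zero {P : ℂ[X]} (hP : P ≠ 0) : ∃ B R, IsBlaschkeFactorization P B R := by
  have hsplit := C_leadingCoeff_mul_prod_multiset_X_sub_C
    (IsAlgClosed.card_roots_eq_natDegree (p := P))
  have hprod : ∃ B R, IsBlaschkeFactorization (P.roots.map fun a => X - C a).prod B R := by
    refine Multiset.prod_induction (fun Q => ∃ B R, IsBlaschkeFactorization Q B R) _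
      (fun _ _ ⟨_, _, h₁⟩ ⟨_, _, h₂⟩ => ⟨_, _, h₁.mul h₂⟩)
      ⟨1, 1, by simpa using const one_ne_zero⟩ ?_
    simp only [Multiset.mem_map]
    rintro _ ⟨a, -, rfl⟩
    exact exists_X_sub_C a
  obtain ⟨B, R, h⟩ := hprod
  exact ⟨_, _, hsplit ▸ (const (leadingCoeff_ne_zero.mpr hP)).mul h⟩

end IsBlaschkeFactorization

theorem eval_reverse_map_conj (P : ℂ[X]) {z : ℂ} (hz : z ≠ 0) :
    (P.map (starRingEnd ℂ)).reverse.eval z = z ^ P.natDegree * conj (P.eval (conj z)⁻¹) := by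
  let _ : Invertible z⁻¹ := invertibleOfNonzero (inv_ne_zero hz)
  have h := eval₂_reverse_mul_pow (RingHom.id ℂ) z⁻¹ (P.map (starRingEnd ℂ))
  rw [invOf_eq_inv, inv_inv, ← eval, ← eval, natDegree_map,
    show z⁻¹ = conj (conj z)⁻¹ by simp, eval_map_apply, map_inv₀, Complex.conj_conj] at h
  rw [← h, inv_pow, mul_comm, mul_assoc, inv_mul_cancel₀ (pow_ne_zero _ hz), mul_one]

-- Infinitely many points suffice, and unlike agreement on the whole circle this survives
-- cancelling a common factor `X - C a` with `‖a‖ = 1`.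
def NormsAgreeOnCircle (P Q : ℂ[X]) : Prop :=
  {z : ℂ | ‖z‖ = 1 ∧ ‖P.eval z‖ = ‖Q.eval z‖}.Infinite

namespace NormsAgreeOnCircle

variable {P Q : ℂ[X]}

theorem symm (h : NormsAgreeOnCircle P Q) : NormsAgreeOnCircle Q P :=
  Set.Infinite.mono (fun _ hz => ⟨hz.1, hz.2.symm⟩) h

theorem of_mul_left {a : ℂ} (h : NormsAgreeOnCircle ((X - C a) * P) ((X - C a) * Q)) :
    NormsAgreeOnCircle P Q := by
  refine Set.Infinite.mono ?_ (h.sdiff (Set.finite_singleton a))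
  rintro z ⟨⟨hz, hPQ⟩, hza⟩
  refine ⟨hz, ?_⟩
  simp only [eval_mul, eval_sub, eval_X, eval_C, norm_mul] at hPQ
  exact mul_left_cancel₀ (norm_ne_zero_iff.mpr (sub_ne_zero.mpr hza)) hPQ

-- On the circle both sides equal `z ^ (P.natDegree + Q.natDegree) * ‖P.eval z‖ ^ 2`.
theorem mul_reverse_map_conj_eq (h : NormsAgreeOnCircle P Q) :
    P * (P.map (starRingEnd ℂ)).reverse * X ^ Q.natDegree =
      Q * (Q.map (starRingEnd ℂ)).reverse * X ^ P.natDegree := by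
  refine eq_of_infinite_eval_eq _ _ (Set.Infinite.mono ?_ h)
  rintro z ⟨hz, hPQ⟩
  have hz0 : z ≠ 0 := norm_ne_zero_iff.mp (by rw [hz]; exact one_ne_zero)
  have hconj : (conj z)⁻¹ = z := by rw [← Complex.inv_eq_conj hz, inv_inv]
  have hsq : P.eval z * conj (P.eval z) = Q.eval z * conj (Q.eval z) := by
    simp only [Complex.mul_conj, Complex.normSq_eq_norm_sq, hPQ]
  simp only [Set.mem_ofPred_eq, eval_mul, eval_pow, eval_X, eval_reverse_map_conj _ hz0, hconj]
  linear_combination (z ^ P.natDegree * z ^ Q.natDegree) * hsq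

theorem isRoot_or_isRoot_inv_conj {a : ℂ} (h : NormsAgreeOnCircle P Q) (ha : a ≠ 0)
    (hPa : P.IsRoot a) : Q.IsRoot a ∨ Q.IsRoot (conj a)⁻¹ := by
  have := congrArg (eval a) h.mul_reverse_map_conj_eq
  simp only [eval_mul, eval_pow, eval_X, hPa.eq_zero, zero_mul, eval_reverse_map_conj _ ha] at this
  simpa [ha] using this.symm

theorem isRoot_of_isRoot (h : NormsAgreeOnCircle P Q) (hQ : ∀ z : ℂ, ‖z‖ < 1 → Q.eval z ≠ 0)
    {a : ℂ} (hPa : P.IsRoot a) (ha : 1 ≤ ‖a‖) : Q.IsRoot a := by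
  have ha0 : a ≠ 0 := norm_ne_zero_iff.mp (by linarith)
  rcases h.isRoot_or_isRoot_inv_conj ha0 hPa with hQa | hb
  · exact hQa
  rcases ha.lt_or_eq with ha1 | ha1
  · exact absurd hb (hQ _ (by rw [norm_inv, Complex.norm_conj]; exact inv_lt_one_of_one_lt₀ ha1))
  · rwa [← Complex.inv_eq_conj ha1.symm, inv_inv] at hb

theorem exists_eq_C_mul (h : NormsAgreeOnCircle P Q) (hP : ∀ z : ℂ, ‖z‖ < 1 → P.eval z ≠ 0)
    (hQ : ∀ z : ℂ, ‖z‖ < 1 → Q.eval z ≠ 0) : ∃ c : ℂ, ‖c‖ = 1 ∧ P = C c * Q := by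
  induction hn : P.natDegree + Q.natDegree using Nat.strong_induction_on generalizing P Q with
  | _ n ih =>
  have hP0 : P ≠ 0 := fun h0 => hP 0 (by simp) (by simp [h0])
  have hQ0 : Q ≠ 0 := fun h0 => hQ 0 (by simp) (by simp [h0])
  rcases n.eq_zero_or_pos with rfl | hpos
  · obtain ⟨p, rfl⟩ := natDegree_eq_zero.mp (by omega : P.natDegree = 0)
    obtain ⟨q, rfl⟩ := natDegree_eq_zero.mp (by omega : Q.natDegree = 0)
    have hq : q ≠ 0 := by simpa using hQ0
    obtain ⟨z, -, hz⟩ := h.nonempty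
    simp only [eval_C] at hz
    exact ⟨p / q, by rw [norm_div, hz, div_self (norm_ne_zero_iff.mpr hq)],
      by rw [← C_mul, div_mul_cancel₀ _ hq]⟩
  obtain ⟨a, ha⟩ := Complex.exists_root (f := P * Q) (natDegree_pos_iff_degree_pos.mp
    (by rwa [natDegree_mul hP0 hQ0, hn]))
  have ha1 : 1 ≤ ‖a‖ := not_lt.mp fun ha1 => (root_mul.mp ha).elim (hP a ha1) (hQ a ha1)
  have hPa : P.IsRoot a := (root_mul.mp ha).elim id (h.symm.isRoot_of_isRoot hP · ha1)
  have hQa : Q.IsRoot a := (root_mul.mp ha).elim (h.isRoot_of_isRoot hQ · ha1) id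
  have cancel : ∀ R : ℂ[X], R ≠ 0 → R.IsRoot a → (∀ z : ℂ, ‖z‖ < 1 → R.eval z ≠ 0) →
      ∃ R₁ : ℂ[X], R = (X - C a) * R₁ ∧ R₁.natDegree + 1 = R.natDegree ∧
        ∀ z : ℂ, ‖z‖ < 1 → R₁.eval z ≠ 0 := by
    intro R hR0 hRa hR
    obtain ⟨R₁, rfl⟩ := dvd_iff_isRoot.mpr hRa
    refine ⟨R₁, rfl, ?_, fun z hz => right_ne_zero_of_mul (by simpa using hR z hz)⟩
    rw [natDegree_mul (X_sub_C_ne_zero a) (right_ne_zero_of_mul hR0), natDegree_X_sub_C,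
      add_comm]
  obtain ⟨P₁, rfl, hP₁, hP₁0⟩ := cancel P hP0 hPa hP
  obtain ⟨Q₁, rfl, hQ₁, hQ₁0⟩ := cancel Q hQ0 hQa hQ
  obtain ⟨c, hc, hPQ⟩ := ih _ (by omega) h.of_mul_left hP₁0 hQ₁0 rfl
  exact ⟨c, hc, by rw [hPQ, mul_left_comm]⟩

end NormsAgreeOnCircle

/-- A rational function of modulus one on the unit circle is a quotient of two
finite Blaschke products. -/
theorem rational_circle_preserving_is_quotient_blaschke (P Q : Polynomial ℂ) (hQ : Q ≠ 0)
    (h : ∀ z : ℂ, ‖z‖ = 1 → Q.eval z ≠ 0 →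
      ‖P.eval z / Q.eval z‖ = 1) :
    ∃ B₁ B₂ : ℂ → ℂ, IsFiniteBlaschke B₁ ∧ IsFiniteBlaschke B₂ ∧
      ∀ z : ℂ, ‖z‖ ≤ 1 → P.eval z * B₂ z = Q.eval z * B₁ z := by
  have hcircle : ({z : ℂ | ‖z‖ = 1} \ {z | Q.IsRoot z}).Infinite :=
    infinite_setOf_norm_eq_one.sdiff (finite_setOfPred_isRoot hQ)
  have hPQ : ∀ z ∈ {z : ℂ | ‖z‖ = 1} \ {z | Q.IsRoot z}, ‖P.eval z‖ = ‖Q.eval z‖ :=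
    fun z ⟨hz, hQz⟩ => by
      have := h z hz hQz
      rwa [norm_div, div_eq_one_iff_eq (norm_ne_zero_iff.mpr hQz)] at this
  have hP : P ≠ 0 := by
    rintro rfl
    obtain ⟨z, hz⟩ := hcircle.nonempty
    exact hz.2 (norm_eq_zero.mp (by simpa using (hPQ z hz).symm))
  obtain ⟨BP, RP, hfP⟩ := IsBlaschkeFactorization.exists_of_ne_zero hP
  obtain ⟨BQ, RQ, hfQ⟩ := IsBlaschkeFactorization.exists_of_ne_zero hQ
  have hR : NormsAgreeOnCircle RP RQ := Set.Infinite.mono (fun z hz =>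
    ⟨hz.1, by rw [hfP.norm_eval_eq hz.1, hfQ.norm_eval_eq hz.1, hPQ z hz]⟩) hcircle
  obtain ⟨c, hc, hRc⟩ := hR.exists_eq_C_mul hfP.eval_ne_zero hfQ.eval_ne_zero
  refine ⟨_, BQ, (IsFiniteBlaschke.const hc).mul hfP.isFiniteBlaschke, hfQ.isFiniteBlaschke,
    fun z hz => ?_⟩
  rw [hfP.eval_eq z hz, hfQ.eval_eq z hz, hRc, eval_mul, eval_C, Pi.mul_apply]
  ring
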